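/- arXiv:2412.06038 — 6 statements merged into one kernel-verified Lean document; each statement's English description precedes it below -/
import Mathlib

section
/- For the problem of minimizing ∑_{i=1}^N w_i D_0 Q_i^{-2} subject to P²C ∑_i log₂ Q_i ≤ B̄ and 1 ≤ Q_i ≤ Q_max, a point (Q_1*,...,Q_N*) satisfying the KKT conditions is given by Q_i* = min{Q_max, max{1, sqrt(w_i · ln 2 · (u_max - u_min)² / (2ν*))}}, where ν* > 0 is chosen so that ∑_i log₂ Q_i* = B̄/(P²C). -/
theorem stmt4 (N P C : ℕ) (hP : 0 < P) (hC : 0 < C)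
    (w : Fin N → ℝ) (hw : ∀ i, 0 < w i)
    (umin umax : ℝ) (hu : umin < umax)
    (D0 : ℝ) (hD0 : D0 = (P ^ 2 * C : ℝ) * (umax - umin) ^ 2 / 4)
    (Qmax Bbar ν : ℝ) (hQmax : 1 ≤ Qmax) (hν : 0 < ν)
    (Qstar : Fin N → ℝ)
    (hQstar : ∀ i, Qstar i =
      min Qmax (max 1 (Real.sqrt (w i * Real.log 2 * (umax - umin) ^ 2 / (2 * ν)))))
    (hbudget : ∑ i, Real.logb 2 (Qstar i) = Bbar / (P ^ 2 * C : ℝ)) :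
    (∀ i, Qstar i ∈ Set.Icc 1 Qmax) ∧
    (P ^ 2 * C : ℝ) * ∑ i, Real.logb 2 (Qstar i) ≤ Bbar ∧
    ∃ lam gam : Fin N → ℝ,
      (∀ i, 0 ≤ lam i) ∧ (∀ i, 0 ≤ gam i) ∧
      (∀ i, lam i * (1 - Qstar i) = 0) ∧
      (∀ i, gam i * (Qstar i - Qmax) = 0) ∧
      (∀ i, gam i - lam i + w i * (-2 * D0 / (Qstar i) ^ 3)
        + ν * (P ^ 2 * C : ℝ) / (Qstar i * Real.log 2) = 0) := by
  have hln2 : (0:ℝ) < Real.log 2 := Real.log_pos one_lt_two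
  have hPC : (0:ℝ) < (P:ℝ)^2 * (C:ℝ) := by positivity
  have hΔ : (0:ℝ) < (umax - umin)^2 := by
    have h := sub_pos.mpr hu
    positivity
  set K : Fin N → ℝ := fun i => w i * Real.log 2 * (umax - umin)^2 / (2*ν) with hK
  have hKpos : ∀ i, 0 < K i := by
    intro i
    have := hw i
    simp only [hK]
    positivity
  have hmem : ∀ i, Qstar i ∈ Set.Icc 1 Qmax := by
    intro i
    rw [hQstar i]
    exact ⟨le_min hQmax (le_max_left _ _), min_le_left _ _⟩
  have hQ1 : ∀ i, 1 ≤ Qstar i := fun i => (hmem i).1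
  have hQpos : ∀ i, 0 < Qstar i := fun i => lt_of_lt_of_le one_pos (hQ1 i)
  set g : Fin N → ℝ := fun i =>
    w i * (-2 * D0 / (Qstar i)^3) + ν * ((P:ℝ)^2 * C) / (Qstar i * Real.log 2) with hg
  have key : ∀ i, g i * ((Qstar i)^3 * Real.log 2)
      = ν * ((P:ℝ)^2 * C) * ((Qstar i)^2 - K i) := by
    intro i
    have hQ0 : Qstar i ≠ 0 := ne_of_gt (hQpos i)
    have hν0 : ν ≠ 0 := ne_of_gt hν
    have hl0 : Real.log 2 ≠ 0 := ne_of_gt hln2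
    simp only [hg, hK, hD0]
    field_simp
    ring
  -- sign lemmas
  have hgle : ∀ i, 1 < Qstar i → g i ≤ 0 := by
    intro i h1
    have hs : Qstar i ≤ Real.sqrt (K i) := by
      rw [hQstar i] at h1 ⊢
      have hmax : 1 < max 1 (Real.sqrt (K i)) := lt_of_lt_of_le h1 (min_le_right _ _)
      have hsq : 1 < Real.sqrt (K i) := by
        rcases max_cases 1 (Real.sqrt (K i)) with ⟨he, _⟩ | ⟨he, _⟩
        · rw [he] at hmax; exact absurd hmax (lt_irrefl 1)
        · rwa [he] at hmax
      rw [max_eq_right hsq.le]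
      exact min_le_right _ _
    have hsq2 : (Qstar i)^2 ≤ K i := by
      have h2 : (Qstar i)^2 ≤ (Real.sqrt (K i))^2 :=
        pow_le_pow_left₀ (hQpos i).le hs 2
      rwa [Real.sq_sqrt (hKpos i).le] at h2
    have hp : (0:ℝ) < (Qstar i)^3 * Real.log 2 := by
      have := hQpos i; positivity
    have h2 : ν * ((P:ℝ)^2 * C) * ((Qstar i)^2 - K i) ≤ 0 :=
      mul_nonpos_of_nonneg_of_nonpos (mul_pos hν hPC).le (sub_nonpos.mpr hsq2)
    rw [← key i] at h2
    exact le_of_mul_le_mul_right (by rw [zero_mul]; exact h2) hp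
  have hgge : ∀ i, Qstar i < Qmax → 0 ≤ g i := by
    intro i h1
    have hs : Real.sqrt (K i) ≤ Qstar i := by
      rw [hQstar i] at h1 ⊢
      have : min Qmax (max 1 (Real.sqrt (K i))) = max 1 (Real.sqrt (K i)) := by
        rcases min_cases Qmax (max 1 (Real.sqrt (K i))) with ⟨he, _⟩ | ⟨he, _⟩
        · rw [he] at h1; exact absurd h1 (lt_irrefl _)
        · exact he
      rw [this]
      exact le_max_right _ _
    have hsq2 : K i ≤ (Qstar i)^2 := by
      have h2 : (Real.sqrt (K i))^2 ≤ (Qstar i)^2 :=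
        pow_le_pow_left₀ (Real.sqrt_nonneg _) hs 2
      rwa [Real.sq_sqrt (hKpos i).le] at h2
    have hp : (0:ℝ) < (Qstar i)^3 * Real.log 2 := by
      have := hQpos i; positivity
    have h2 : 0 ≤ ν * ((P:ℝ)^2 * C) * ((Qstar i)^2 - K i) :=
      mul_nonneg (mul_pos hν hPC).le (sub_nonneg.mpr hsq2)
    rw [← key i] at h2
    exact le_of_mul_le_mul_right (by rw [zero_mul]; exact h2) hp
  refine ⟨hmem, ?_, ?_⟩
  · rw [hbudget]
    rw [mul_div_cancel₀ _ (ne_of_gt hPC)]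
  · refine ⟨fun i => max 0 (g i), fun i => max 0 (-g i),
      fun i => le_max_left _ _, fun i => le_max_left _ _, ?_, ?_, ?_⟩
    · intro i
      rcases eq_or_lt_of_le (hQ1 i) with h | h
      · rw [← h]; ring
      · show max 0 (g i) * (1 - Qstar i) = 0
        rw [max_eq_left (hgle i h), zero_mul]
    · intro i
      rcases eq_or_lt_of_le (hmem i).2 with h | h
      · rw [h]; ring
      · show max 0 (-g i) * (Qstar i - Qmax) = 0
        rw [max_eq_left (neg_nonpos.mpr (hgge i h)), zero_mul]
    · intro i
      have : max 0 (-g i) - max 0 (g i) + g i = 0 := by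
        rcases le_total 0 (g i) with h | h
        · rw [max_eq_right h, max_eq_left (neg_nonpos.mpr h)]; ring
        · rw [max_eq_left h, max_eq_right (neg_nonneg.mpr h)]; ring
      have hexp : g i = w i * (-2 * D0 / (Qstar i)^3)
          + ν * ((P:ℝ)^2 * C) / (Qstar i * Real.log 2) := rfl
      show max 0 (-g i) - max 0 (g i) + w i * (-2 * D0 / (Qstar i)^3)
          + ν * ((P:ℝ)^2 * C) / (Qstar i * Real.log 2) = 0
      linear_combination this - hexp
end

section
/- Let μ ∈ [0, 3/13] and x = log₂((1-μ)/4). Then for all M ≥ 0, the quantity D_{1} = (4/3)μ(x+2)·2^{2M} + 4μ(x+1)·2^M + x(1 - (16/3)μ) satisfies D_1 ≤ (20/3)μ - 2 ≤ 0. -/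
theorem stmt7 (μ : ℝ) (hμ : μ ∈ Set.Icc (0 : ℝ) (3 / 13))
    (x : ℝ) (hx : x = Real.logb 2 ((1 - μ) / 4)) :
    ∀ M : ℝ, 0 ≤ M →
      (4 / 3) * μ * (x + 2) * (2 : ℝ) ^ (2 * M) + 4 * μ * (x + 1) * (2 : ℝ) ^ M
        + x * (1 - (16 / 3) * μ) ≤ (20 / 3) * μ - 2 ∧
      (20 / 3) * μ - 2 ≤ 0 := by
  obtain ⟨h0, h1⟩ := hμ
  have hpos : (0:ℝ) < (1 - μ) / 4 := by linarith
  have h24 : (2:ℝ) ^ (-2 : ℝ) = 1 / 4 := by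
    have h := Real.rpow_intCast (2:ℝ) (-2)
    push_cast at h
    rw [h]
    norm_num
  have hx2 : x ≤ -2 := by
    rw [hx, Real.logb_le_iff_le_rpow (by norm_num) hpos, h24]
    linarith
  intro M hM
  have ht1 : (1:ℝ) ≤ (2:ℝ) ^ M := by
    have := Real.rpow_le_rpow_of_exponent_le (by norm_num : (1:ℝ) ≤ 2) hM
    simpa using this
  have ht2 : (2:ℝ) ^ (2 * M) = ((2:ℝ) ^ M) ^ 2 := by
    rw [mul_comm, Real.rpow_mul (by norm_num)]
    have := Real.rpow_natCast ((2:ℝ) ^ M) 2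
    push_cast at this
    exact this
  set t := (2:ℝ) ^ M with htdef
  rw [ht2]
  have hA : μ * (-(x + 2)) * (t ^ 2 - 1) ≥ 0 := by
    apply mul_nonneg (mul_nonneg h0 (by linarith)) (by nlinarith)
  have hB : μ * (-(x + 1)) * (t - 1) ≥ 0 := by
    apply mul_nonneg (mul_nonneg h0 (by linarith)) (by linarith)
  constructor
  · nlinarith [hA, hB, hx2]
  · linarith
end

section
/- For μ ∈ [0, 3/13], the function M ↦ D(2^M; μ) = (D_0/(1-μ)) · 2^{M·log₂((1-μ)/4)} · ((4/3)μ·4^M + 4μ·2^M + (1 - (16/3)μ)) is convex and monotonically decreasing on [0, ∞). -/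
/-!
Since `2 ^ (M * logb 2 q) = q ^ M`, the bound is `K * (a * (1 - μ) ^ M + b * ((1 - μ) / 2) ^ M +
c * ((1 - μ) / 4) ^ M)`, a combination of exponentials `exp (r i * M)` with `a, b ≥ 0`,
`a + b + c = 1` and `r i ≤ 0`; only `c` can be negative, and it sits on the smallest exponent `r₀`.
After factoring out `exp (r₀ * M)`, the remaining terms of the first derivative decrease and those
of the second derivative increase with `M ≥ 0`, so on `[0, ∞)` the first derivative is
nonpositive and the second nonnegative as soon as this holds at `M = 0`. At `M = 0` they are a
linear and a quadratic form in `log (1 - μ) ≤ 0` and `log 2 > 0`.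
-/

open Real Set

noncomputable def expSum {ι : Type*} [Fintype ι] (c r : ι → ℝ) (x : ℝ) : ℝ :=
  ∑ i, c i * exp (r i * x)

section ExpSum

variable {ι : Type*} [Fintype ι] (c r : ι → ℝ)

theorem expSum_zero : expSum c r 0 = ∑ i, c i := by
  simp [expSum]

theorem expSum_neg : expSum (-c) r = -expSum c r := by
  ext x
  simp [expSum]

theorem hasDerivAt_expSum (x : ℝ) : HasDerivAt (expSum c r) (expSum (c * r) r x) x := by
  have hterm (i : ι) : HasDerivAt (fun y => c i * exp (r i * y)) (c i * r i * exp (r i * x)) x := by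
    simpa [mul_comm, mul_left_comm, mul_assoc] using
      (((hasDerivAt_id x).const_mul (r i)).exp).const_mul (c i)
  exact HasDerivAt.fun_sum fun i _ => hterm i

theorem differentiable_expSum : Differentiable ℝ (expSum c r) :=
  fun x => (hasDerivAt_expSum c r x).differentiableAt

theorem deriv_expSum : deriv (expSum c r) = expSum (c * r) r :=
  funext fun x => (hasDerivAt_expSum c r x).deriv

variable {c r}

theorem exp_mul_expSum_zero_le_expSum {r₀ x : ℝ} (hx : 0 ≤ x)
    (h : ∀ i, r i = r₀ ∨ 0 ≤ c i ∧ r₀ ≤ r i) :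
    exp (r₀ * x) * expSum c r 0 ≤ expSum c r x := by
  rw [expSum_zero, Finset.mul_sum]
  refine Finset.sum_le_sum fun i _ => ?_
  rcases h i with hr | ⟨hc, hr⟩
  · rw [hr, mul_comm]
  · rw [mul_comm]
    gcongr

theorem expSum_le_exp_mul_expSum_zero {r₀ x : ℝ} (hx : 0 ≤ x)
    (h : ∀ i, r i = r₀ ∨ c i ≤ 0 ∧ r₀ ≤ r i) :
    expSum c r x ≤ exp (r₀ * x) * expSum c r 0 := by
  have := exp_mul_expSum_zero_le_expSum (c := -c) hx fun i =>
    (h i).imp_right fun ⟨hc, hr⟩ => ⟨neg_nonneg.2 hc, hr⟩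
  simpa [expSum_neg] using this

theorem convexOn_Ici_expSum {r₀ : ℝ} (h : ∀ i, r i = r₀ ∨ 0 ≤ c i ∧ r₀ ≤ r i)
    (h₀ : 0 ≤ ∑ i, c i * r i * r i) : ConvexOn ℝ (Ici 0) (expSum c r) := by
  refine convexOn_of_deriv2_nonneg' (convex_Ici 0) (differentiable_expSum c r).differentiableOn
    (by rw [deriv_expSum]; exact (differentiable_expSum _ r).differentiableOn) fun x hx => ?_
  have h' : ∀ i, r i = r₀ ∨ 0 ≤ (c * r * r) i ∧ r₀ ≤ r i := fun i =>
    (h i).imp_right fun ⟨hc, hr⟩ =>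
      ⟨by simpa [mul_assoc] using mul_nonneg hc (mul_self_nonneg (r i)), hr⟩
  calc 0 ≤ exp (r₀ * x) * expSum (c * r * r) r 0 := by
        rw [expSum_zero]; exact mul_nonneg (exp_pos _).le (by simpa using h₀)
    _ ≤ expSum (c * r * r) r x := exp_mul_expSum_zero_le_expSum hx h'
    _ = deriv^[2] (expSum c r) x := by simp [deriv_expSum]

theorem antitoneOn_Ici_expSum {r₀ : ℝ} (h : ∀ i, r i = r₀ ∨ 0 ≤ c i ∧ r₀ ≤ r i ∧ r i ≤ 0)
    (h₀ : ∑ i, c i * r i ≤ 0) : AntitoneOn (expSum c r) (Ici 0) := by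
  refine antitoneOn_of_deriv_nonpos (convex_Ici 0)
    (differentiable_expSum c r).continuous.continuousOn (differentiable_expSum c r).differentiableOn
    fun x hx => ?_
  have h' : ∀ i, r i = r₀ ∨ (c * r) i ≤ 0 ∧ r₀ ≤ r i := fun i =>
    (h i).imp_right fun ⟨hc, hr, hr'⟩ => ⟨mul_nonpos_of_nonneg_of_nonpos hc hr', hr⟩
  calc deriv (expSum c r) x = expSum (c * r) r x := by rw [deriv_expSum]
    _ ≤ exp (r₀ * x) * expSum (c * r) r 0 := expSum_le_exp_mul_expSum_zero (interior_subset hx) h'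
    _ ≤ 0 := by
        rw [expSum_zero]; exact mul_nonpos_of_nonneg_of_nonpos (exp_pos _).le (by simpa using h₀)

end ExpSum

noncomputable def distortionBound (D0 μ M : ℝ) : ℝ :=
  D0 / (1 - μ) * (2 : ℝ) ^ (M * logb 2 ((1 - μ) / 4)) *
    ((4 / 3) * μ * (4 : ℝ) ^ M + 4 * μ * (2 : ℝ) ^ M + (1 - (16 / 3) * μ))

theorem distortionBound_eq_expSum {D0 μ : ℝ} (hμ : μ < 1) :
    distortionBound D0 μ =
      expSum ![D0 / (1 - μ) * (4 / 3 * μ), D0 / (1 - μ) * (4 * μ), D0 / (1 - μ) * (1 - 16 / 3 * μ)]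
        ![log (1 - μ), log (1 - μ) - log 2, log (1 - μ) - 2 * log 2] := by
  ext M
  have hq : 0 < (1 - μ) / 4 := by linarith
  have h2 : (2 : ℝ) ^ (M * logb 2 ((1 - μ) / 4)) = ((1 - μ) / 4) ^ M := by
    rw [mul_comm, rpow_mul zero_le_two, rpow_logb two_pos (by norm_num) hq]
  have h4 : ((1 - μ) / 4) ^ M * 4 ^ M = (1 - μ) ^ M := by
    rw [← mul_rpow hq.le (by norm_num), div_mul_cancel₀ _ (by norm_num)]
  have h2' : ((1 - μ) / 4) ^ M * 2 ^ M = ((1 - μ) / 2) ^ M := by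
    rw [← mul_rpow hq.le (by norm_num)]; ring_nf
  have hlog₂ : log ((1 - μ) / 2) = log (1 - μ) - log 2 := log_div (by linarith) two_ne_zero
  have hlog₄ : log ((1 - μ) / 4) = log (1 - μ) - 2 * log 2 := by
    rw [log_div (by linarith) four_ne_zero, show (4 : ℝ) = 2 ^ 2 by norm_num, log_pow]
    push_cast
    ring
  simp only [distortionBound, expSum, Fin.sum_univ_three, Matrix.cons_val_zero, Matrix.cons_val_one,
    Matrix.cons_val_two, Matrix.head_cons, Matrix.tail_cons]
  rw [← hlog₂, ← hlog₄, ← rpow_def_of_pos (by linarith), ← rpow_def_of_pos (by linarith),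
    ← rpow_def_of_pos hq, h2, ← h4, ← h2']
  ring

theorem weighted_rate_nonpos {μ p L : ℝ} (hμ : μ ≤ 3 / 10) (hp : p ≤ 0) (hL : 0 ≤ L) :
    4 / 3 * μ * p + 4 * μ * (p - L) + (1 - 16 / 3 * μ) * (p - 2 * L) ≤ 0 := by
  nlinarith [mul_nonneg (by linarith : 0 ≤ 2 - 20 / 3 * μ) hL]

/-- The threshold `3 / 13` is where the coefficient `4 - 52 / 3 * μ` of `L ^ 2` vanishes. -/
theorem weighted_sq_rate_nonneg {μ p L : ℝ} (hμ : μ ≤ 3 / 13) (hp : p ≤ 0) (hL : 0 ≤ L) :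
    0 ≤ 4 / 3 * μ * p ^ 2 + 4 * μ * (p - L) ^ 2 + (1 - 16 / 3 * μ) * (p - 2 * L) ^ 2 := by
  nlinarith [mul_nonneg (mul_nonneg (by linarith : 0 ≤ 2 - 20 / 3 * μ) (neg_nonneg.2 hp)) hL,
    mul_nonneg (by linarith : 0 ≤ 4 - 52 / 3 * μ) (sq_nonneg L), sq_nonneg p]

theorem stmt9 (D0 μ : ℝ) (hD0 : 0 < D0) (hμ : μ ∈ Set.Icc (0 : ℝ) (3 / 13)) :
    ConvexOn ℝ (Set.Ici (0 : ℝ))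
      (fun M : ℝ => D0 / (1 - μ) * (2 : ℝ) ^ (M * Real.logb 2 ((1 - μ) / 4)) *
        ((4 / 3) * μ * (4 : ℝ) ^ M + 4 * μ * (2 : ℝ) ^ M + (1 - (16 / 3) * μ))) ∧
    AntitoneOn
      (fun M : ℝ => D0 / (1 - μ) * (2 : ℝ) ^ (M * Real.logb 2 ((1 - μ) / 4)) *
        ((4 / 3) * μ * (4 : ℝ) ^ M + 4 * μ * (2 : ℝ) ^ M + (1 - (16 / 3) * μ)))
      (Set.Ici (0 : ℝ)) := by
  obtain ⟨hμ0, hμ1⟩ := hμ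
  have hK : 0 < D0 / (1 - μ) := div_pos hD0 (by linarith)
  have ha : 0 ≤ D0 / (1 - μ) * (4 / 3 * μ) := mul_nonneg hK.le (by linarith)
  have hb : 0 ≤ D0 / (1 - μ) * (4 * μ) := mul_nonneg hK.le (by linarith)
  have hp : log (1 - μ) ≤ 0 := log_nonpos (by linarith) (by linarith)
  have hL : 0 < log 2 := log_pos one_lt_two
  have hr₀ : log (1 - μ) - 2 * log 2 ≤ log (1 - μ) := by linarith
  have hr₁ : log (1 - μ) - 2 * log 2 ≤ log (1 - μ) - log 2 := by linarith
  have hr₁' : log (1 - μ) - log 2 ≤ 0 := by linarith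
  change ConvexOn ℝ _ (distortionBound D0 μ) ∧ AntitoneOn (distortionBound D0 μ) _
  rw [distortionBound_eq_expSum (by linarith)]
  refine ⟨convexOn_Ici_expSum (r₀ := log (1 - μ) - 2 * log 2) (fun i => ?_) ?_,
    antitoneOn_Ici_expSum (r₀ := log (1 - μ) - 2 * log 2) (fun i => ?_) ?_⟩
  · fin_cases i
    exacts [.inr ⟨ha, hr₀⟩, .inr ⟨hb, hr₁⟩, .inl rfl]
  · refine (mul_nonneg hK.le (weighted_sq_rate_nonneg hμ1 hp hL.le)).trans_eq ?_
    simp only [Fin.sum_univ_three, Matrix.cons_val_zero, Matrix.cons_val_one, Matrix.cons_val_two,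
      Matrix.head_cons, Matrix.tail_cons]
    ring
  · fin_cases i
    exacts [.inr ⟨ha, hr₀, hp⟩, .inr ⟨hb, hr₁, hr₁'⟩, .inl rfl]
  · refine le_of_eq_of_le ?_
      (mul_nonpos_of_nonneg_of_nonpos hK.le (weighted_rate_nonpos (hμ1.trans (by norm_num)) hp hL.le))
    simp only [Fin.sum_univ_three, Matrix.cons_val_zero, Matrix.cons_val_one, Matrix.cons_val_two,
      Matrix.head_cons, Matrix.tail_cons]
    ring
end

section
/- For μ ∈ [0, 3/13], the distortion function Q ↦ D(Q; μ) = (D_0/(1-μ)) · Q^{log₂((1-μ)/4)} · ((4/3)μQ² + 4μQ + (1 - (16/3)μ)) is convex on [1, ∞). -/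
open Real Set Filter

private lemma convexOn_congr_aux {s : Set ℝ} {f g : ℝ → ℝ} (h : ConvexOn ℝ s g)
    (he : ∀ x ∈ s, f x = g x) : ConvexOn ℝ s f := by
  refine ⟨h.1, fun x hx y hy a b ha hb hab => ?_⟩
  rw [he x hx, he y hy, he _ (h.1 hx hy ha hb hab)]
  exact h.2 hx hy ha hb hab

private lemma hasDerivAt_rpow_shift (p : ℝ) {x : ℝ} (hx : 0 < x) :
    HasDerivAt (fun x : ℝ => x ^ p) (p * x ^ (p - 1)) x :=
  Real.hasDerivAt_rpow_const (Or.inl hx.ne')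

private lemma aux_convex (a b c l : ℝ)
    (hA : 0 ≤ a * ((l + 2) * (l + 1))) (hB : 0 ≤ b * ((l + 1) * l))
    (hsum : 0 ≤ a * ((l + 2) * (l + 1)) + b * ((l + 1) * l) + c * (l * (l - 1))) :
    ConvexOn ℝ (Set.Ici (1 : ℝ))
      (fun x : ℝ => a * x ^ (l + 2) + b * x ^ (l + 1) + c * x ^ l) := by
  set g0 : ℝ → ℝ := fun x => a * x ^ (l + 2) + b * x ^ (l + 1) + c * x ^ l with hg0def
  set g1 : ℝ → ℝ := fun x =>
      a * ((l + 2) * x ^ (l + 1)) + b * ((l + 1) * x ^ l) + c * (l * x ^ (l - 1)) with hg1def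
  set g2 : ℝ → ℝ := fun x =>
      a * ((l + 2) * ((l + 1) * x ^ l)) + b * ((l + 1) * (l * x ^ (l - 1)))
        + c * (l * ((l - 1) * x ^ (l - 2))) with hg2def
  have hd0 : ∀ x : ℝ, 0 < x → HasDerivAt g0 (g1 x) x := by
    intro x hx
    have h1 : HasDerivAt (fun x : ℝ => x ^ (l + 2)) ((l + 2) * x ^ (l + 1)) x := by
      simpa [show l + 2 - 1 = l + 1 by ring] using hasDerivAt_rpow_shift (l + 2) hx
    have h2 : HasDerivAt (fun x : ℝ => x ^ (l + 1)) ((l + 1) * x ^ l) x := by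
      simpa [show l + 1 - 1 = l by ring] using hasDerivAt_rpow_shift (l + 1) hx
    have h3 : HasDerivAt (fun x : ℝ => x ^ l) (l * x ^ (l - 1)) x :=
      hasDerivAt_rpow_shift l hx
    exact ((h1.const_mul a).add (h2.const_mul b)).add (h3.const_mul c)
  have hd1 : ∀ x : ℝ, 0 < x → HasDerivAt g1 (g2 x) x := by
    intro x hx
    have h1 : HasDerivAt (fun x : ℝ => x ^ (l + 1)) ((l + 1) * x ^ l) x := by
      simpa [show l + 1 - 1 = l by ring] using hasDerivAt_rpow_shift (l + 1) hx
    have h2 : HasDerivAt (fun x : ℝ => x ^ l) (l * x ^ (l - 1)) x :=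
      hasDerivAt_rpow_shift l hx
    have h3 : HasDerivAt (fun x : ℝ => x ^ (l - 1)) ((l - 1) * x ^ (l - 2)) x := by
      simpa [show l - 1 - 1 = l - 2 by ring] using hasDerivAt_rpow_shift (l - 1) hx
    have := ((((h1.const_mul (l + 2)).const_mul a).add
      ((h2.const_mul (l + 1)).const_mul b)).add ((h3.const_mul l).const_mul c))
    exact this
  have hIoi : interior (Set.Ici (1 : ℝ)) = Set.Ioi 1 := interior_Ici
  have hxpos : ∀ x : ℝ, x ∈ Set.Ioi (1 : ℝ) → 0 < x := fun x hx => lt_trans one_pos hx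
  have hev : ∀ x : ℝ, x ∈ Set.Ioi (1 : ℝ) → deriv g0 =ᶠ[nhds x] g1 := by
    intro x hx
    filter_upwards [eventually_gt_nhds (hxpos x hx)] with y hy
    exact (hd0 y hy).deriv
  refine convexOn_of_deriv2_nonneg (convex_Ici 1) ?_ ?_ ?_ ?_
  · intro x hx
    exact ((hd0 x (lt_of_lt_of_le one_pos hx)).continuousAt).continuousWithinAt
  · rw [hIoi]
    exact fun x hx => ((hd0 x (hxpos x hx)).differentiableAt).differentiableWithinAt
  · rw [hIoi]
    intro x hx
    exact (((hd1 x (hxpos x hx)).differentiableAt).congr_of_eventuallyEq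
      (hev x hx)).differentiableWithinAt
  · rw [hIoi]
    intro x hx
    have h2 : deriv^[2] g0 x = g2 x := by
      have e1 : deriv (deriv g0) x = deriv g1 x := (hev x hx).deriv_eq
      have e2 : deriv g1 x = g2 x := (hd1 x (hxpos x hx)).deriv
      simp only [Function.iterate_succ, Function.iterate_zero, Function.comp_apply, id_eq]
      rw [e1, e2]
    rw [h2]
    have hx1 : (1 : ℝ) ≤ x := le_of_lt hx
    have p1 : x ^ (l - 2) ≤ x ^ (l - 1) :=
      Real.rpow_le_rpow_of_exponent_le hx1 (by linarith)
    have p2 : x ^ (l - 1) ≤ x ^ l :=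
      Real.rpow_le_rpow_of_exponent_le hx1 (by linarith)
    have p3 : (0 : ℝ) < x ^ (l - 2) := Real.rpow_pos_of_pos (hxpos x hx) _
    have t1 : a * ((l + 2) * (l + 1)) * x ^ (l - 2) ≤ a * ((l + 2) * (l + 1)) * x ^ l :=
      mul_le_mul_of_nonneg_left (le_trans p1 p2) hA
    have t2 : b * ((l + 1) * l) * x ^ (l - 2) ≤ b * ((l + 1) * l) * x ^ (l - 1) :=
      mul_le_mul_of_nonneg_left p1 hB
    have t3 : 0 ≤ (a * ((l + 2) * (l + 1)) + b * ((l + 1) * l) + c * (l * (l - 1)))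
        * x ^ (l - 2) := mul_nonneg hsum p3.le
    simp only [hg2def]
    nlinarith [t1, t2, t3]

theorem stmt11 (D0 μ : ℝ) (hD0 : 0 < D0) (hμ : μ ∈ Set.Icc (0 : ℝ) (3 / 13)) :
    ConvexOn ℝ (Set.Ici (1 : ℝ))
      (fun Q : ℝ => D0 / (1 - μ) * Q ^ (Real.logb 2 ((1 - μ) / 4)) *
        ((4 / 3) * μ * Q ^ 2 + 4 * μ * Q + (1 - (16 / 3) * μ))) := by
  obtain ⟨hμ0, hμ1⟩ := hμ
  have h1μ : 0 < 1 - μ := by linarith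
  set l : ℝ := Real.logb 2 ((1 - μ) / 4) with hldef
  have hC : 0 < D0 / (1 - μ) := div_pos hD0 h1μ
  set C : ℝ := D0 / (1 - μ) with hCdef
  have hl : l ≤ -2 := by
    have h1 : Real.logb 2 ((1 - μ) / 4) ≤ Real.logb 2 (1 / 4) :=
      Real.logb_le_logb_of_le (by norm_num : (1:ℝ) < 2) (by linarith) (by linarith)
    have hlog2 : Real.log 2 ≠ 0 := ne_of_gt (Real.log_pos (by norm_num))
    have hlog14 : Real.log (1 / 4 : ℝ) = -(2 * Real.log 2) := by
      rw [show (1 / 4 : ℝ) = ((2:ℝ) ^ (2:ℕ))⁻¹ by norm_num, Real.log_inv, Real.log_pow]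
      push_cast; ring
    have h2 : Real.logb 2 (1 / 4 : ℝ) = -2 := by
      rw [Real.logb, hlog14]; field_simp
    calc l ≤ Real.logb 2 (1/4) := h1
    _ = -2 := h2
  -- coefficients
  have hA : 0 ≤ C * (4 / 3 * μ) * ((l + 2) * (l + 1)) := by
    have h1 : 0 ≤ (l + 2) * (l + 1) := by nlinarith
    have h2 : 0 ≤ C * (4 / 3 * μ) := by positivity
    exact mul_nonneg h2 h1
  have hB : 0 ≤ C * (4 * μ) * ((l + 1) * l) := by
    have h1 : 0 ≤ (l + 1) * l := by nlinarith
    have h2 : 0 ≤ C * (4 * μ) := by positivity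
    exact mul_nonneg h2 h1
  have hsum : 0 ≤ C * (4 / 3 * μ) * ((l + 2) * (l + 1)) + C * (4 * μ) * ((l + 1) * l)
      + C * (1 - 16 / 3 * μ) * (l * (l - 1)) := by
    have key : 0 ≤ 4 / 3 * μ * ((l + 2) * (l + 1)) + 4 * μ * ((l + 1) * l)
        + (1 - 16 / 3 * μ) * (l * (l - 1)) := by
      set β : ℝ := -l - 2 with hβdef
      have hβ : 0 ≤ β := by simp [hβdef]; linarith
      have t1 : 0 ≤ μ * β * (1 + β) := mul_nonneg (mul_nonneg hμ0 hβ) (by linarith)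
      have t2 : 0 ≤ (2 + β) * (3 - 12 * μ) := mul_nonneg (by linarith) (by linarith)
      have t3 : 0 ≤ (2 + β) * β * (3 - 4 * μ) :=
        mul_nonneg (mul_nonneg (by linarith) hβ) (by linarith)
      have hlβ : l = -2 - β := by simp [hβdef]; ring
      rw [hlβ]
      nlinarith [t1, t2, t3]
    nlinarith [mul_nonneg hC.le key]
  have hconv := aux_convex (C * (4 / 3 * μ)) (C * (4 * μ)) (C * (1 - 16 / 3 * μ)) l hA hB hsum
  refine convexOn_congr_aux hconv ?_
  intro x hx
  have hx0 : 0 < x := lt_of_lt_of_le one_pos hx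
  have e2 : x ^ (l + 2) = x ^ l * x ^ (2 : ℕ) := by
    rw [Real.rpow_add hx0, show (2:ℝ) = ((2:ℕ):ℝ) by norm_num, Real.rpow_natCast]
  have e1 : x ^ (l + 1) = x ^ l * x := by
    rw [Real.rpow_add hx0, Real.rpow_one]
  rw [e2, e1]
  ring
end

section
/- Let μ ∈ [0, 3/13), x = log₂((1-μ)/4), w > 0, D_0 > 0, c > 0, and define h(Q) = (w D_0 ln 2 / (c(1-μ))) Q^x · (−(4/3)μ Q² log₂(1-μ) − 4μQ log₂((1-μ)/2) − (1 − (16/3)μ) log₂((1-μ)/4)). Then h'(Q) = (w D_0 ln 2/(c(1-μ))) Q^{x-1} g(Q) where g(Q) = −(4/3)μ(x+2)²Q² − 4μ(x+1)²Q − x²(1 − (16/3)μ), and g(Q) < 0 for all Q ≥ 1; hence h is strictly decreasing on [1, ∞). -/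
/-!
Since `log₂(1 - μ) = x + 2` and `log₂((1 - μ)/2) = x + 1`, the function is
`h Q = K Q^x (A Q² + B Q + C)` with `K > 0`, and differentiating `Q^x Q^k` gives `(x + k) Q^(x+k-1)`,
whence the formula for `h'`. For `Q ≥ 1` the terms of `g` that involve `Q` only decrease, so
`g Q ≤ g 1 = -x² - μ (40x + 28)/3`, and `μ < 3/13` together with `x ≤ -2` makes this at most
`-(13x + 14)(x + 2)/13 ≤ 0`, with strict inequality overall.
-/

open Real

lemma Real.logb_two_div_two_pow {a : ℝ} (ha : a ≠ 0) (n : ℕ) :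
    logb 2 (a / 2 ^ n) = logb 2 a - n := by
  rw [logb_div ha (by positivity), logb_pow, logb_self_eq_one one_lt_two, mul_one]

lemma Real.logb_two_eq_logb_two_div_four_add_two {a : ℝ} (ha : a ≠ 0) :
    logb 2 a = logb 2 (a / 4) + 2 := by
  have := logb_two_div_two_pow ha 2
  norm_num at this
  linarith

lemma Real.logb_two_div_two_eq_logb_two_div_four_add_one {a : ℝ} (ha : a ≠ 0) :
    logb 2 (a / 2) = logb 2 (a / 4) + 1 := by
  have h1 := logb_two_div_two_pow ha 1
  have h2 := logb_two_div_two_pow ha 2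
  norm_num at h1 h2
  linarith

lemma hasDerivAt_mul_rpow_mul_quadratic {Q : ℝ} (hQ : Q ≠ 0) (K x A B C : ℝ) :
    HasDerivAt (fun Q : ℝ => K * Q ^ x * (A * Q ^ 2 + B * Q + C))
      (K * Q ^ (x - 1) * ((x + 2) * A * Q ^ 2 + (x + 1) * B * Q + x * C)) Q := by
  have hpow : HasDerivAt (fun Q : ℝ => Q ^ x) (x * Q ^ (x - 1)) Q :=
    hasDerivAt_rpow_const (Or.inl hQ)
  have hquad : HasDerivAt (fun Q : ℝ => A * Q ^ 2 + B * Q + C) (A * (2 * Q) + B) Q := by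
    simpa using (((hasDerivAt_pow 2 Q).const_mul A).add ((hasDerivAt_id Q).const_mul B)).add_const C
  have hsplit : Q ^ x = Q ^ (x - 1) * Q := by
    rw [← rpow_add_one hQ, sub_add_cancel]
  refine ((hpow.const_mul K).mul hquad).congr_deriv ?_
  rw [hsplit]
  ring

lemma quadratic_neg_of_one_le {μ x Q : ℝ} (hμ0 : 0 ≤ μ) (hμ1 : μ < 3 / 13) (hx : x ≤ -2)
    (hQ : 1 ≤ Q) :
    -(4 / 3) * μ * (x + 2) ^ 2 * Q ^ 2 - 4 * μ * (x + 1) ^ 2 * Q - x ^ 2 * (1 - (16 / 3) * μ) < 0 := by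
  have hle_at_one : -(4 / 3) * μ * (x + 2) ^ 2 * Q ^ 2 - 4 * μ * (x + 1) ^ 2 * Q
      ≤ -(4 / 3) * μ * (x + 2) ^ 2 - 4 * μ * (x + 1) ^ 2 := by
    have hQ2 : 1 ≤ Q ^ 2 := one_le_pow₀ hQ
    nlinarith [mul_nonneg hμ0 (sq_nonneg (x + 2)), mul_nonneg hμ0 (sq_nonneg (x + 1))]
  have hμ_bound : -μ * (40 * x + 28) / 3 < -(40 * x + 28) / 13 := by
    nlinarith
  have hroots : 0 ≤ (13 * x + 14) * (x + 2) := mul_nonneg_of_nonpos_of_nonpos (by linarith) (by linarith)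
  nlinarith

theorem stmt12 (μ w D0 c : ℝ) (hμ0 : 0 ≤ μ) (hμ1 : μ < 3 / 13)
    (hw : 0 < w) (hD0 : 0 < D0) (hc : 0 < c)
    (x : ℝ) (hx : x = Real.logb 2 ((1 - μ) / 4))
    (h g : ℝ → ℝ)
    (hh : ∀ Q : ℝ, h Q = (w * D0 * Real.log 2 / (c * (1 - μ))) * Q ^ x *
      (-(4 / 3) * μ * Q ^ 2 * Real.logb 2 (1 - μ)
        - 4 * μ * Q * Real.logb 2 ((1 - μ) / 2)
        - (1 - (16 / 3) * μ) * Real.logb 2 ((1 - μ) / 4)))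
    (hgdef : ∀ Q : ℝ, g Q =
      -(4 / 3) * μ * (x + 2) ^ 2 * Q ^ 2 - 4 * μ * (x + 1) ^ 2 * Q
        - x ^ 2 * (1 - (16 / 3) * μ)) :
    (∀ Q : ℝ, 1 ≤ Q →
      deriv h Q = (w * D0 * Real.log 2 / (c * (1 - μ))) * Q ^ (x - 1) * g Q) ∧
    (∀ Q : ℝ, 1 ≤ Q → g Q < 0) ∧
    StrictAntiOn h (Set.Ici (1 : ℝ)) := by
  have hμ' : 0 < 1 - μ := by linarith
  set K := w * D0 * log 2 / (c * (1 - μ))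
  have hK : 0 < K := div_pos (by positivity) (mul_pos hc hμ')
  have hlog : logb 2 (1 - μ) = x + 2 := hx ▸ logb_two_eq_logb_two_div_four_add_two hμ'.ne'
  have hlog_half : logb 2 ((1 - μ) / 2) = x + 1 :=
    hx ▸ logb_two_div_two_eq_logb_two_div_four_add_one hμ'.ne'
  have hx2 : x ≤ -2 := by
    linarith [logb_nonpos one_lt_two hμ'.le (by linarith : 1 - μ ≤ 1)]
  have hh' : h = fun Q => K * Q ^ x *
      (-(4 / 3) * μ * (x + 2) * Q ^ 2 + -4 * μ * (x + 1) * Q + -(1 - (16 / 3) * μ) * x) := by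
    funext Q
    rw [hh, hlog, hlog_half, ← hx]
    ring
  have hderiv (Q : ℝ) (hQ : 1 ≤ Q) : HasDerivAt h (K * Q ^ (x - 1) * g Q) Q := by
    rw [hh', hgdef]
    convert hasDerivAt_mul_rpow_mul_quadratic (Q := Q) (by positivity) K x _ _ _ using 1
    ring
  have hg (Q : ℝ) (hQ : 1 ≤ Q) : g Q < 0 := hgdef Q ▸ quadratic_neg_of_one_le hμ0 hμ1 hx2 hQ
  refine ⟨fun Q hQ => (hderiv Q hQ).deriv, hg, ?_⟩
  refine strictAntiOn_of_hasDerivWithinAt_neg (f' := fun Q => K * Q ^ (x - 1) * g Q) (convex_Ici 1)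
    (fun Q hQ => (hderiv Q hQ).continuousAt.continuousWithinAt) (fun Q hQ => ?_) (fun Q hQ => ?_)
    <;> rw [interior_Ici] at hQ
  · exact (hderiv Q hQ.le).hasDerivWithinAt
  · exact mul_neg_of_pos_of_neg (mul_pos hK (rpow_pos_of_pos (one_pos.trans hQ) _)) (hg Q hQ.le)
end

section
/- Let b be a uniformly distributed M-bit string passed through M independent binary symmetric channels each with flip probability μ ∈ [0, 1/2], and suppose at most one bit flip occurs. If u is a value in a uniform-quantizer cell of width Δ with M bits, the expected squared reconstruction error is upper bounded by (1-μ)^M (Δ/2)² + (1-μ)^{M-1} μ (Δ/2)² ∑_{t=1}^{M} (2^{M+1}(1/2)^t + 1)², where the first term bounds the zero-error event and the second bounds single-bit-flip events: a flip in bit position t changes the reconstructed value by 2^{M-t}Δ, so the resulting squared error is at most ((2^{M-t}Δ + Δ/2))² = (Δ/2)²(2^{M+1-t}+1)². -/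
theorem stmt16 (M : ℕ) (hM : 0 < M) (μ Δ u q : ℝ) (r : Fin M → ℝ)
    (hμ : μ ∈ Set.Icc (0 : ℝ) (1 / 2)) (hΔ : 0 ≤ Δ)
    (hq : |u - q| ≤ Δ / 2)
    (hr : ∀ t : Fin M, |r t - q| = (2 : ℝ) ^ (M - (t.val + 1)) * Δ) :
    (1 - μ) ^ M * (u - q) ^ 2 + ∑ t : Fin M, (1 - μ) ^ (M - 1) * μ * (u - r t) ^ 2 ≤
      (1 - μ) ^ M * (Δ / 2) ^ 2 +
      (1 - μ) ^ (M - 1) * μ * (Δ / 2) ^ 2 *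
        ∑ t : Fin M, ((2 : ℝ) ^ (M + 1) * (1 / 2 : ℝ) ^ (t.val + 1) + 1) ^ 2 := by
  obtain ⟨hμ0, hμ2⟩ := hμ
  have h1μ : (0:ℝ) ≤ 1 - μ := by linarith
  have hq' := abs_le.mp hq
  have hsq : (u - q)^2 ≤ (Δ/2)^2 := by nlinarith [hq'.1, hq'.2]
  have hsum : ∀ t : Fin M, (1-μ)^(M-1)*μ*(u - r t)^2 ≤
      (1-μ)^(M-1)*μ*((Δ/2)^2*((2:ℝ)^(M+1)*(1/2:ℝ)^(t.val+1)+1)^2) := by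
    intro t
    have ht : t.val + 1 ≤ M := t.isLt
    have hc : (2:ℝ)^(M+1)*(1/2:ℝ)^(t.val+1) = 2^(M-(t.val+1)) * 2 := by
      have hM1 : M + 1 = (M - (t.val+1)) + (t.val+1) + 1 := by omega
      rw [hM1, pow_add, pow_add, one_div, inv_pow]
      field_simp
    have habs : |u - r t| ≤ Δ/2 + 2^(M-(t.val+1)) * Δ := by
      calc |u - r t| = |(u - q) - (r t - q)| := by ring_nf
        _ ≤ |u - q| + |r t - q| := abs_sub _ _
        _ ≤ Δ/2 + 2^(M-(t.val+1)) * Δ := by rw [hr t]; linarith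
    have habs' := abs_le.mp habs
    have h2 : (u - r t)^2 ≤ (Δ/2)^2*((2:ℝ)^(M+1)*(1/2:ℝ)^(t.val+1)+1)^2 := by
      rw [hc]
      nlinarith [habs'.1, habs'.2]
    exact mul_le_mul_of_nonneg_left h2 (by positivity)
  have hrhs : (1-μ)^(M-1)*μ*(Δ/2)^2 *
        ∑ t : Fin M, ((2:ℝ)^(M+1)*(1/2:ℝ)^(t.val+1)+1)^2
      = ∑ t : Fin M, (1-μ)^(M-1)*μ*((Δ/2)^2*((2:ℝ)^(M+1)*(1/2:ℝ)^(t.val+1)+1)^2) := by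
    rw [Finset.mul_sum]; apply Finset.sum_congr rfl; intro t _; ring
  rw [hrhs]
  exact add_le_add (mul_le_mul_of_nonneg_left hsq (pow_nonneg h1μ M))
    (Finset.sum_le_sum fun t _ => hsum t)
end
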